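/- If G is a d-regular connected graph with Laplacian L having smallest positive eigenvalue λ₁, then the rate of convergence R of the CBGA satisfies R ≥ 1 − 2qp(1−p)^d λ₁; moreover the function p ↦ p(1−p)^d is maximized on (0,1) at p* = 1/(d+1). -/

import Mathlib

open Matrix Finset Filter

/-! For an edge `uv`, the entry `(u, v)` of the random successor matrix is nonzero exactly when
the random set `S` meets `{u} ∪ N(u)` in `{v}`, an event of probability `p (1-p)^d`; hence
`E[P] = 1 - q p (1-p)^d L`. Jensen's inequality, applied along the recursion that defines the
second-moment map `𝓛`, gives `xᵀ 𝓛ᵗ(Ω) x ≥ ‖Ω E[P]ᵗ x‖²`. For an eigenvector `x` of `L` with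
eigenvalue `λ₁` the right-hand side is `(1 - q p (1-p)^d λ₁)^{2t} ‖Ω x‖²`, and `Ω x ≠ 0` because
`x` is not constant. A Frobenius-norm bound keeps every rate below a common constant, so the
supremum defining `R` is not the junk value of an unbounded family. The bound on `p (1-p)^d` is
Bernoulli's inequality. -/

section SecondMoment

variable {m n σ : Type*} [Fintype m] [Fintype n] [Fintype σ]

def secondMomentMap (w : σ → ℝ) (P : σ → Matrix n n ℝ) (M : Matrix n n ℝ) : Matrix n n ℝ :=
  ∑ S, w S • ((P S)ᵀ * M * P S)

lemma dotProduct_secondMomentMap_mulVec (w : σ → ℝ) (P : σ → Matrix n n ℝ)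
    (M : Matrix n n ℝ) (y : n → ℝ) :
    y ⬝ᵥ secondMomentMap w P M *ᵥ y = ∑ S, w S * (P S *ᵥ y ⬝ᵥ M *ᵥ (P S *ᵥ y)) := by
  simp only [secondMomentMap, sum_mulVec, dotProduct_sum, smul_mulVec, dotProduct_smul,
    smul_eq_mul, ← mulVec_mulVec, dotProduct_mulVec, vecMul_transpose]

lemma dotProduct_transpose_mul_self_mulVec (B : Matrix m n ℝ) (y : n → ℝ) :
    y ⬝ᵥ (Bᵀ * B) *ᵥ y = B *ᵥ y ⬝ᵥ B *ᵥ y := by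
  rw [← mulVec_mulVec, dotProduct_mulVec, vecMul_transpose]

lemma sum_smul_dotProduct_self_le {w : σ → ℝ} (hw0 : ∀ S, 0 ≤ w S) (hw1 : ∑ S, w S = 1)
    (v : σ → n → ℝ) :
    (∑ S, w S • v S) ⬝ᵥ (∑ S, w S • v S) ≤ ∑ S, w S * (v S ⬝ᵥ v S) := by
  have jensen (i : n) : (∑ S, w S * v S i) ^ 2 ≤ ∑ S, w S * v S i ^ 2 := by
    simpa using (even_two.convexOn_pow (𝕜 := ℝ)).map_sum_le (fun S _ => hw0 S) hw1
      (p := fun S => v S i) (fun _ _ => Set.mem_univ _)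
  calc (∑ S, w S • v S) ⬝ᵥ (∑ S, w S • v S) = ∑ i, (∑ S, w S * v S i) ^ 2 := by
        simp only [dotProduct, Finset.sum_apply, Pi.smul_apply, smul_eq_mul, sq]
    _ ≤ ∑ i, ∑ S, w S * v S i ^ 2 := sum_le_sum fun i _ => jensen i
    _ = ∑ S, w S * (v S ⬝ᵥ v S) := by
        rw [sum_comm]
        simp only [dotProduct, mul_sum, sq]

lemma mulVec_dotProduct_mulVec_self_le (B : Matrix m n ℝ) (y : n → ℝ) :
    B *ᵥ y ⬝ᵥ B *ᵥ y ≤ (∑ i, ∑ j, B i j ^ 2) * (y ⬝ᵥ y) := by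
  calc B *ᵥ y ⬝ᵥ B *ᵥ y = ∑ i, (∑ j, B i j * y j) ^ 2 := by simp only [dotProduct, mulVec, sq]
    _ ≤ ∑ i, (∑ j, B i j ^ 2) * ∑ j, y j ^ 2 :=
        sum_le_sum fun i _ => sum_mul_sq_le_sq_mul_sq _ _ _
    _ = (∑ i, ∑ j, B i j ^ 2) * (y ⬝ᵥ y) := by simp only [← sum_mul, dotProduct, sq]

variable {w : σ → ℝ} (hw0 : ∀ S, 0 ≤ w S) (P : σ → Matrix n n ℝ)
include hw0

lemma dotProduct_iterate_secondMomentMap_le (B : Matrix m n ℝ) (t : ℕ) (y : n → ℝ) :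
    y ⬝ᵥ (secondMomentMap w P)^[t] (Bᵀ * B) *ᵥ y ≤
      (∑ i, ∑ j, B i j ^ 2) * (∑ S, w S * ∑ i, ∑ j, P S i j ^ 2) ^ t * (y ⬝ᵥ y) := by
  set a := ∑ i, ∑ j, B i j ^ 2
  set c := ∑ S, w S * ∑ i, ∑ j, P S i j ^ 2
  have hc : 0 ≤ c := sum_nonneg fun S _ => mul_nonneg (hw0 S) (by positivity)
  induction t generalizing y with
  | zero =>
    simpa [dotProduct_transpose_mul_self_mulVec] using mulVec_dotProduct_mulVec_self_le B y
  | succ t ih =>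
    rw [Function.iterate_succ_apply', dotProduct_secondMomentMap_mulVec]
    calc ∑ S, w S * (P S *ᵥ y ⬝ᵥ (secondMomentMap w P)^[t] (Bᵀ * B) *ᵥ (P S *ᵥ y))
        ≤ ∑ S, w S * (a * c ^ t * ((∑ i, ∑ j, P S i j ^ 2) * (y ⬝ᵥ y))) := by
          gcongr with S
          · exact hw0 S
          · exact (ih _).trans (by gcongr; exact mulVec_dotProduct_mulVec_self_le _ _)
      _ = a * c ^ t * (y ⬝ᵥ y) * c := by
          rw [mul_sum]
          exact sum_congr rfl fun S _ => by ring
      _ = a * c ^ (t + 1) * (y ⬝ᵥ y) := by ring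

lemma dotProduct_self_mulVec_pow_sum_smul_le [DecidableEq n] (hw1 : ∑ S, w S = 1)
    (B : Matrix m n ℝ) (t : ℕ) (y : n → ℝ) :
    B *ᵥ ((∑ S, w S • P S) ^ t *ᵥ y) ⬝ᵥ B *ᵥ ((∑ S, w S • P S) ^ t *ᵥ y) ≤
      y ⬝ᵥ (secondMomentMap w P)^[t] (Bᵀ * B) *ᵥ y := by
  induction t generalizing y with
  | zero => simp [dotProduct_transpose_mul_self_mulVec]
  | succ t ih =>
    have hmean : B *ᵥ ((∑ S, w S • P S) ^ (t + 1) *ᵥ y) =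
        ∑ S, w S • B *ᵥ ((∑ S, w S • P S) ^ t *ᵥ (P S *ᵥ y)) := by
      rw [pow_succ, ← mulVec_mulVec, sum_mulVec, mulVec_sum, mulVec_sum]
      simp only [smul_mulVec, mulVec_smul]
    rw [Function.iterate_succ_apply', dotProduct_secondMomentMap_mulVec, hmean]
    refine (sum_smul_dotProduct_self_le hw0 hw1 _).trans ?_
    gcongr with S
    exacts [hw0 S, ih _]

end SecondMoment

lemma pow_mulVec_eq_pow_smul {n : Type*} [Fintype n] [DecidableEq n] {M : Matrix n n ℝ}
    {x : n → ℝ} {r : ℝ} (h : M *ᵥ x = r • x) (t : ℕ) : (M ^ t) *ᵥ x = r ^ t • x := by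
  induction t with
  | zero => simp
  | succ t ih => rw [pow_succ, ← mulVec_mulVec, h, mulVec_smul, ih, smul_smul, ← pow_succ']

section RootGrowth

open Topology

lemma tendsto_mul_pow_rpow_inv {a c : ℝ} (ha : 0 < a) (hc : 0 ≤ c) :
    Tendsto (fun t : ℕ => (a * c ^ t) ^ (t : ℝ)⁻¹) atTop (𝓝 c) := by
  have hroot : Tendsto (fun t : ℕ => a ^ (t : ℝ)⁻¹) atTop (𝓝 1) := by
    simpa using tendsto_const_nhds.rpow
      (tendsto_inv_atTop_zero.comp tendsto_natCast_atTop_atTop) (Or.inl ha.ne')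
  refine (by simpa using hroot.mul_const c : Tendsto _ _ (𝓝 c)).congr' ?_
  filter_upwards [eventually_ne_atTop 0] with t ht
  rw [Real.mul_rpow ha.le (by positivity), Real.pow_rpow_inv_natCast hc ht]

variable {s : ℕ → ℝ} {a c : ℝ}

lemma isBoundedUnder_rpow_inv_and_limsup_le (ha : 0 ≤ a) (hc : 0 ≤ c) (hs0 : ∀ t, 0 ≤ s t)
    (hs : ∀ t, s t ≤ a * c ^ t) :
    IsBoundedUnder (· ≤ ·) atTop (fun t => s t ^ (t : ℝ)⁻¹) ∧
      limsup (fun t => s t ^ (t : ℝ)⁻¹) atTop ≤ c := by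
  have hlim := tendsto_mul_pow_rpow_inv (a := a + 1) (by positivity) hc
  have hle (t : ℕ) : s t ^ (t : ℝ)⁻¹ ≤ ((a + 1) * c ^ t) ^ (t : ℝ)⁻¹ :=
    Real.rpow_le_rpow (hs0 t) ((hs t).trans (by nlinarith [pow_nonneg hc t])) (by positivity)
  refine ⟨hlim.isBoundedUnder_le.mono_le (Eventually.of_forall hle), ?_⟩
  rw [← hlim.limsup_eq]
  exact limsup_le_limsup (Eventually.of_forall hle)
    (isCoboundedUnder_le_of_le atTop fun t => Real.rpow_nonneg (hs0 t) _)
    hlim.isBoundedUnder_le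

lemma le_limsup_rpow_inv (ha : 0 < a) (hc : 0 ≤ c) (hs : ∀ t, a * c ^ t ≤ s t)
    (hbdd : IsBoundedUnder (· ≤ ·) atTop (fun t => s t ^ (t : ℝ)⁻¹)) :
    c ≤ limsup (fun t => s t ^ (t : ℝ)⁻¹) atTop := by
  have hlim := tendsto_mul_pow_rpow_inv ha hc
  rw [← hlim.limsup_eq]
  exact limsup_le_limsup
    (Eventually.of_forall fun t => Real.rpow_le_rpow (by positivity) (hs t) (by positivity))
    hlim.isBoundedUnder_ge.isCoboundedUnder_le hbdd

end RootGrowth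

section Rates

variable {m n σ : Type*} [Fintype m] [Fintype n] [DecidableEq n] [Fintype σ]
  {w : σ → ℝ} (hw0 : ∀ S, 0 ≤ w S) (hw1 : ∑ S, w S = 1) (P : σ → Matrix n n ℝ) {κ : ℝ}
include hw0 hw1

lemma isBoundedUnder_and_limsup_iterate_secondMomentMap_le (hκ : 0 ≤ κ) (B : Matrix m n ℝ)
    (x : n → ℝ) :
    IsBoundedUnder (· ≤ ·) atTop
        (fun t : ℕ => (κ * (x ⬝ᵥ (secondMomentMap w P)^[t] (Bᵀ * B) *ᵥ x)) ^ (t : ℝ)⁻¹) ∧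
      limsup (fun t : ℕ => (κ * (x ⬝ᵥ (secondMomentMap w P)^[t] (Bᵀ * B) *ᵥ x)) ^ (t : ℝ)⁻¹)
        atTop ≤ ∑ S, w S * ∑ i, ∑ j, P S i j ^ 2 :=
  isBoundedUnder_rpow_inv_and_limsup_le (a := κ * ((∑ i, ∑ j, B i j ^ 2) * (x ⬝ᵥ x)))
    (mul_nonneg hκ (mul_nonneg (by positivity) (dotProduct_self_star_nonneg x)))
    (sum_nonneg fun S _ => mul_nonneg (hw0 S) (by positivity))
    (fun t => mul_nonneg hκ ((dotProduct_self_star_nonneg _).trans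
      (dotProduct_self_mulVec_pow_sum_smul_le hw0 P hw1 B t x)))
    (fun t => (mul_le_mul_of_nonneg_left
      (dotProduct_iterate_secondMomentMap_le hw0 P B t x) hκ).trans_eq (by ring))

lemma sq_le_limsup_rpow_inv_iterate_secondMomentMap (hκ : 0 < κ) {B : Matrix m n ℝ}
    {x : n → ℝ} {r : ℝ} (hr : (∑ S, w S • P S) *ᵥ x = r • x) (hBx : B *ᵥ x ≠ 0) :
    r ^ 2 ≤
      limsup (fun t : ℕ => (κ * (x ⬝ᵥ (secondMomentMap w P)^[t] (Bᵀ * B) *ᵥ x)) ^ (t : ℝ)⁻¹)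
        atTop := by
  refine le_limsup_rpow_inv (a := κ * (B *ᵥ x ⬝ᵥ B *ᵥ x))
    (mul_pos hκ (dotProduct_self_star_pos_iff.mpr hBx)) (sq_nonneg r) (fun t => ?_)
    (isBoundedUnder_and_limsup_iterate_secondMomentMap_le hw0 hw1 P hκ.le B x).1
  have h := dotProduct_self_mulVec_pow_sum_smul_le hw0 P hw1 B t x
  rw [pow_mulVec_eq_pow_smul hr, mulVec_smul, smul_dotProduct, dotProduct_smul, smul_eq_mul,
    smul_eq_mul] at h
  calc κ * (B *ᵥ x ⬝ᵥ B *ᵥ x) * (r ^ 2) ^ t = κ * (r ^ t * (r ^ t * (B *ᵥ x ⬝ᵥ B *ᵥ x))) := by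
        ring
    _ ≤ _ := by gcongr

end Rates

lemma sum_pow_mul_one_sub_pow (α : Type*) [Fintype α] (p : ℝ) :
    ∑ S : Finset α, p ^ S.card * (1 - p) ^ (Fintype.card α - S.card) = 1 := by
  simpa [← powerset_univ] using sum_pow_mul_eq_add_pow p (1 - p) (univ : Finset α)

lemma sum_filter_inter_eq_pow_mul_one_sub_pow {α : Type*} [Fintype α] [DecidableEq α]
    (p : ℝ) {T U : Finset α} (hUT : U ⊆ T) :
    ∑ S ∈ univ.filter (fun S => S ∩ T = U), p ^ S.card * (1 - p) ^ (Fintype.card α - S.card) =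
      p ^ U.card * (1 - p) ^ (T.card - U.card) := by
  calc ∑ S ∈ univ.filter (fun S => S ∩ T = U), p ^ S.card * (1 - p) ^ (Fintype.card α - S.card)
      = ∑ B ∈ Tᶜ.powerset, p ^ (U ∪ B).card * (1 - p) ^ (Fintype.card α - (U ∪ B).card) := by
        refine (sum_nbij' (U ∪ ·) (· \ T) ?_ ?_ ?_ ?_ fun _ _ => rfl).symm
        · intro B hB
          simp only [mem_powerset, mem_filter, mem_univ, true_and] at hB ⊢
          grind [mem_compl]
        · intro S hS
          simp only [mem_powerset, mem_filter, mem_univ, true_and] at hS ⊢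
          grind [mem_compl]
        · intro B hB
          simp only [mem_powerset] at hB
          grind [mem_compl]
        · intro S hS
          simp only [mem_filter, mem_univ, true_and] at hS
          grind
    _ = ∑ B ∈ Tᶜ.powerset, p ^ U.card * (1 - p) ^ (T.card - U.card) *
          (p ^ B.card * (1 - p) ^ (Tᶜ.card - B.card)) := by
        refine sum_congr rfl fun B hB => ?_
        have hBT : B.card ≤ Tᶜ.card := card_le_card (mem_powerset.mp hB)
        have hUT' : U.card ≤ T.card := card_le_card hUT
        have hT := card_add_card_compl T
        rw [card_union_of_disjoint
          (disjoint_of_subset_left hUT (subset_compl_iff_disjoint_left.mp (mem_powerset.mp hB))),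
          show Fintype.card α - (U.card + B.card) = (T.card - U.card) + (Tᶜ.card - B.card) by omega]
        ring
    _ = p ^ U.card * (1 - p) ^ (T.card - U.card) := by
        rw [← mul_sum, sum_pow_mul_eq_add_pow, add_sub_cancel, one_pow, mul_one]

lemma mul_one_sub_pow_le (d : ℕ) {x : ℝ} (hx : x < 1) :
    x * (1 - x) ^ d ≤ 1 / ((d : ℝ) + 1) * (1 - 1 / ((d : ℝ) + 1)) ^ d := by
  have hy : 0 < 1 - x := by linarith
  rw [show 1 - 1 / ((d : ℝ) + 1) = d / (d + 1) by field_simp; ring]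
  have bern := one_add_mul_le_pow (a := d / (d + 1) / (1 - x) - 1)
    (by linarith [show 0 ≤ (d : ℝ) / (d + 1) / (1 - x) by positivity]) d
  rw [add_sub_cancel, div_pow, le_div_iff₀ (by positivity)] at bern
  have key : x ≤ 1 / ((d : ℝ) + 1) * (1 + d * (d / (d + 1) / (1 - x) - 1)) := by
    field_simp
    nlinarith [sq_nonneg ((d + 1) * (1 - x) - d)]
  calc x * (1 - x) ^ d
      ≤ 1 / ((d : ℝ) + 1) * (1 + d * (d / (d + 1) / (1 - x) - 1)) * (1 - x) ^ d := by gcongr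
    _ ≤ 1 / ((d : ℝ) + 1) * (d / (d + 1)) ^ d := by rw [mul_assoc]; gcongr

section Graph

variable {n : Type*} [Fintype n] [DecidableEq n]

noncomputable def laplacian : Matrix n n ℝ →ₗ[ℝ] Matrix n n ℝ where
  toFun M := diagonal (fun u => ∑ v, M u v) - M
  map_add' M M' := by
    ext u v
    by_cases h : u = v <;> simp [h, sum_add_distrib] <;> ring
  map_smul' c M := by
    ext u v
    by_cases h : u = v <;> simp [h, ← mul_sum]
    ring

lemma laplacian_mulVec_const (M : Matrix n n ℝ) (c : ℝ) :
    laplacian M *ᵥ Function.const n c = 0 := by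
  ext u
  simp [laplacian, mulVec, dotProduct, diagonal_apply, ← sum_mul]

lemma sum_smul_one_sub_smul_laplacian {σ : Type*} [Fintype σ] {w : σ → ℝ} (hw1 : ∑ S, w S = 1)
    (q : ℝ) (X : σ → Matrix n n ℝ) :
    ∑ S, w S • (1 - q • laplacian (X S)) = 1 - q • laplacian (∑ S, w S • X S) := by
  simp only [smul_sub, sum_sub_distrib, ← sum_smul, hw1, one_smul, map_sum, map_smul, smul_sum]
  congr 1
  exact sum_congr rfl fun S _ => smul_comm _ _ _

noncomputable def successorMatrix (A : Matrix n n ℝ) (S : Finset n) : Matrix n n ℝ :=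
  Matrix.of fun u v =>
    if v ∈ S ∧ u ∉ S ∧ (univ.filter fun m => A u m ≠ 0 ∧ m ∈ S) = {v} then A u v else 0

lemma successor_condition_iff {A : Matrix n n ℝ} {u v : n} (hu : A u u = 0) (huv : A u v ≠ 0)
    (S : Finset n) :
    (v ∈ S ∧ u ∉ S ∧ (univ.filter fun m => A u m ≠ 0 ∧ m ∈ S) = {v}) ↔
      S ∩ insert u (univ.filter fun m => A u m ≠ 0) = {v} := by
  simp only [Finset.ext_iff, mem_filter, mem_univ, true_and, mem_inter, mem_insert,
    mem_singleton]
  grind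

lemma sum_smul_successorMatrix {A : Matrix n n ℝ} (hA : ∀ u, A u u = 0) {d : ℕ}
    (hreg : ∀ u, (univ.filter fun v => A u v ≠ 0).card = d) (p : ℝ) :
    ∑ S : Finset n, (p ^ S.card * (1 - p) ^ (Fintype.card n - S.card)) • successorMatrix A S =
      (p * (1 - p) ^ d) • A := by
  ext u v
  simp only [Matrix.sum_apply, Matrix.smul_apply, smul_eq_mul]
  by_cases huv : A u v = 0
  · simp [successorMatrix, huv]
  have hcard : (insert u (univ.filter fun m => A u m ≠ 0)).card = d + 1 := by
    rw [card_insert_of_notMem (by simp [hA]), hreg]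
  simp only [successorMatrix, of_apply, successor_condition_iff (hA u) huv, mul_ite, mul_zero,
    ← sum_filter, ← sum_mul]
  rw [sum_filter_inter_eq_pow_mul_one_sub_pow p (by simp [huv]), hcard]
  simp

noncomputable def centeringMatrix (n : Type*) [Fintype n] [DecidableEq n] : Matrix n n ℝ :=
  1 - (Fintype.card n : ℝ)⁻¹ • Matrix.of fun _ _ => 1

lemma centeringMatrix_mulVec (x : n → ℝ) :
    centeringMatrix n *ᵥ x = x - Function.const n ((Fintype.card n : ℝ)⁻¹ * ∑ i, x i) := by
  rw [centeringMatrix, sub_mulVec, one_mulVec, smul_mulVec]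
  ext u
  simp [mulVec, dotProduct]

lemma transpose_centeringMatrix_mul_self :
    (centeringMatrix n)ᵀ * centeringMatrix n = centeringMatrix n := by
  set k : ℝ := (Fintype.card n : ℝ)
  have hJ : (Matrix.of fun _ _ => (1 : ℝ) : Matrix n n ℝ) * Matrix.of (fun _ _ => 1) =
      k • Matrix.of fun _ _ => 1 := by
    ext
    simp [mul_apply, k]
  have hk : k⁻¹ * k⁻¹ * k = k⁻¹ := by
    rcases eq_or_ne k 0 with h | h
    · simp [h]
    · field_simp
  have hT : (centeringMatrix n)ᵀ = centeringMatrix n := by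
    rw [centeringMatrix, transpose_sub, transpose_one, transpose_smul]
    rfl
  rw [hT, centeringMatrix, sub_mul, mul_sub, mul_sub, one_mul, mul_one, one_mul,
    smul_mul_smul_comm, hJ, smul_smul, hk]
  abel

lemma centeringMatrix_mulVec_ne_zero {M : Matrix n n ℝ} {x : n → ℝ} {μ : ℝ}
    (hx : x ≠ 0) (hμ : μ ≠ 0) (heig : laplacian M *ᵥ x = μ • x) :
    centeringMatrix n *ᵥ x ≠ 0 := by
  intro h
  rw [centeringMatrix_mulVec, sub_eq_zero] at h
  rw [h, laplacian_mulVec_const, eq_comm, smul_eq_zero] at heig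
  exact heig.elim hμ (h ▸ hx)

end Graph

theorem cbga_regular_rate_lower_bound_general {N : ℕ} (hN : 0 < N)
    (A : Matrix (Fin N) (Fin N) ℝ)
    (hAdiag : ∀ u, A u u = 0)
    (d : ℕ) (hreg : ∀ u, (Finset.univ.filter fun v => A u v ≠ 0).card = d)
    (p q : ℝ) (hp : p ∈ Set.Ioo (0:ℝ) 1)
    (L : Matrix (Fin N) (Fin N) ℝ)
    (hL : L = Matrix.diagonal (fun u => ∑ v, A u v) - A)
    (lam1 : ℝ) (hlam_pos : 0 < lam1)
    (hlam_eig : ∃ w : Fin N → ℝ, w ≠ 0 ∧ L.mulVec w = lam1 • w)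
    (w : Finset (Fin N) → ℝ)
    (hw : ∀ S, w S = p ^ S.card * (1 - p) ^ (N - S.card))
    (Asucc : Finset (Fin N) → Matrix (Fin N) (Fin N) ℝ)
    (hAsucc : ∀ S, Asucc S = Matrix.of (fun u v =>
      if v ∈ S ∧ u ∉ S ∧ (Finset.univ.filter fun m => A u m ≠ 0 ∧ m ∈ S) = {v}
      then A u v else 0))
    (P : Finset (Fin N) → Matrix (Fin N) (Fin N) ℝ)
    (hP : ∀ S, P S = 1 - q •
      (Matrix.diagonal (fun u => ∑ v, Asucc S u v) - Asucc S))
    (Ω : Matrix (Fin N) (Fin N) ℝ)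
    (hΩ : Ω = 1 - (N : ℝ)⁻¹ • Matrix.of (fun _ _ => (1:ℝ)))
    (Lop : Matrix (Fin N) (Fin N) ℝ → Matrix (Fin N) (Fin N) ℝ)
    (hLop : ∀ M, Lop M = ∑ S : Finset (Fin N), w S • ((P S)ᵀ * M * P S))
    (R : ℝ)
    (hR : R = ⨆ x0 : Fin N → ℝ, Filter.limsup
      (fun t : ℕ => ((N : ℝ)⁻¹ * (x0 ⬝ᵥ ((Lop^[t] Ω).mulVec x0))) ^ ((t : ℝ)⁻¹))
      Filter.atTop) :
    (1 - 2 * q * p * (1 - p) ^ d * lam1 ≤ R) ∧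
    (∀ p' ∈ Set.Ioo (0:ℝ) 1,
      p' * (1 - p') ^ d ≤ (1 / ((d : ℝ) + 1)) * (1 - 1 / ((d : ℝ) + 1)) ^ d) := by
  refine ⟨?_, fun x hx => mul_one_sub_pow_le d hx.2⟩
  obtain ⟨x₀, hx₀, heig⟩ := hlam_eig
  replace hw : ∀ S, w S = p ^ S.card * (1 - p) ^ (Fintype.card (Fin N) - S.card) := fun S => by
    rw [hw, Fintype.card_fin]
  replace hP : ∀ S, P S = 1 - q • laplacian (successorMatrix A S) := fun S => by
    rw [hP, hAsucc]; rfl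
  replace hΩ : Ω = centeringMatrix (Fin N) := by rw [hΩ, centeringMatrix, Fintype.card_fin]
  replace hLop : Lop = secondMomentMap w P := funext hLop
  change L = laplacian A at hL
  subst hΩ hLop hL
  have hw0 (S : Finset (Fin N)) : 0 ≤ w S :=
    hw S ▸ mul_nonneg (pow_nonneg hp.1.le _) (pow_nonneg (sub_nonneg.mpr hp.2.le) _)
  have hw1 : ∑ S, w S = 1 := by simpa only [hw] using sum_pow_mul_one_sub_pow (Fin N) p
  have hmean : ∑ S, w S • P S = 1 - (q * (p * (1 - p) ^ d)) • laplacian A := by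
    simp only [hw, hP]
    rw [sum_smul_one_sub_smul_laplacian (sum_pow_mul_one_sub_pow (Fin N) p),
      sum_smul_successorMatrix hAdiag hreg, map_smul, smul_smul]
  have hr : (∑ S, w S • P S) *ᵥ x₀ = (1 - q * (p * (1 - p) ^ d) * lam1) • x₀ := by
    rw [hmean, sub_mulVec, one_mulVec, smul_mulVec, heig, smul_smul, sub_smul, one_smul]
  rw [← transpose_centeringMatrix_mul_self] at hR
  calc 1 - 2 * q * p * (1 - p) ^ d * lam1 ≤ (1 - q * (p * (1 - p) ^ d) * lam1) ^ 2 := by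
        nlinarith [sq_nonneg (q * (p * (1 - p) ^ d) * lam1)]
    _ ≤ _ := sq_le_limsup_rpow_inv_iterate_secondMomentMap hw0 hw1 P (by positivity) hr
        (centeringMatrix_mulVec_ne_zero hx₀ hlam_pos.ne' heig)
    _ ≤ R := hR ▸ le_ciSup ⟨_, Set.forall_mem_range.mpr fun x =>
        (isBoundedUnder_and_limsup_iterate_secondMomentMap_le hw0 hw1 P (by positivity) _ x).2⟩ x₀

/-- If `G` is a `d`-regular connected graph with Laplacian `L` whose smallest
positive eigenvalue is `λ₁`, then the rate of convergence `R` of the CBGA satisfies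
`R ≥ 1 − 2qp(1−p)^d λ₁`; moreover `p ↦ p(1−p)^d` is maximized on `(0,1)` at
`p* = 1/(d+1)`. -/
theorem cbga_regular_rate_lower_bound {N : ℕ} (hN : 0 < N)
    (A : Matrix (Fin N) (Fin N) ℝ)
    (hA01 : ∀ u v, A u v = 0 ∨ A u v = 1)
    (hAdiag : ∀ u, A u u = 0)
    (hconn : ∀ u v : Fin N, u ≠ v → Relation.TransGen (fun a b => A b a ≠ 0) u v)
    (d : ℕ) (hreg : ∀ u, (Finset.univ.filter fun v => A u v ≠ 0).card = d)
    (p q : ℝ) (hp : p ∈ Set.Ioo (0:ℝ) 1) (hq : q ∈ Set.Ioo (0:ℝ) 1)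
    (L : Matrix (Fin N) (Fin N) ℝ)
    (hL : L = Matrix.diagonal (fun u => ∑ v, A u v) - A)
    (lam1 : ℝ) (hlam_pos : 0 < lam1)
    (hlam_eig : ∃ w : Fin N → ℝ, w ≠ 0 ∧ L.mulVec w = lam1 • w)
    (hlam_min : ∀ μ : ℝ, 0 < μ → (∃ w : Fin N → ℝ, w ≠ 0 ∧ L.mulVec w = μ • w) → lam1 ≤ μ)
    (w : Finset (Fin N) → ℝ)
    (hw : ∀ S, w S = p ^ S.card * (1 - p) ^ (N - S.card))
    (Asucc : Finset (Fin N) → Matrix (Fin N) (Fin N) ℝ)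
    (hAsucc : ∀ S, Asucc S = Matrix.of (fun u v =>
      if v ∈ S ∧ u ∉ S ∧ (Finset.univ.filter fun m => A u m ≠ 0 ∧ m ∈ S) = {v}
      then A u v else 0))
    (P : Finset (Fin N) → Matrix (Fin N) (Fin N) ℝ)
    (hP : ∀ S, P S = 1 - q •
      (Matrix.diagonal (fun u => ∑ v, Asucc S u v) - Asucc S))
    (Ω : Matrix (Fin N) (Fin N) ℝ)
    (hΩ : Ω = 1 - (N : ℝ)⁻¹ • Matrix.of (fun _ _ => (1:ℝ)))
    (Lop : Matrix (Fin N) (Fin N) ℝ → Matrix (Fin N) (Fin N) ℝ)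
    (hLop : ∀ M, Lop M = ∑ S : Finset (Fin N), w S • ((P S)ᵀ * M * P S))
    (R : ℝ)
    (hR : R = ⨆ x0 : Fin N → ℝ, Filter.limsup
      (fun t : ℕ => ((N : ℝ)⁻¹ * (x0 ⬝ᵥ ((Lop^[t] Ω).mulVec x0))) ^ ((t : ℝ)⁻¹))
      Filter.atTop) :
    (1 - 2 * q * p * (1 - p) ^ d * lam1 ≤ R) ∧
    (∀ p' ∈ Set.Ioo (0:ℝ) 1,
      p' * (1 - p') ^ d ≤ (1 / ((d : ℝ) + 1)) * (1 - 1 / ((d : ℝ) + 1)) ^ d) :=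
  cbga_regular_rate_lower_bound_general hN A hAdiag d hreg p q hp L hL lam1 hlam_pos hlam_eig w hw
    Asucc hAsucc P hP Ω hΩ Lop hLop R hR
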